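/- arXiv:2003.00488 — 2 statements merged into one kernel-verified Lean document; each statement's English description precedes it below -/
import Mathlib

section
/- Let t be a rooted tree with pairwise distinct leaf labels, S a set of labels, and u a vertex of t with S ⊆ L(u). If counter_S(u) = |S|, then for every child w of u, either L(w) ∩ S = ∅ or L(w) ⊆ S; in particular S is compatible with t at u. -/
inductive RTree (α : Type*) where
  | leaf (a : α)
  | node (children : List (RTree α))

namespace RTree

variable {α : Type*} [DecidableEq α]

/-- The list of leaf labels of a tree. -/
def leafList : RTree α → List α
  | leaf a => [a]
  | node cs => (cs.attach.map fun ⟨w, _⟩ => leafList w).flatten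
decreasing_by have := List.sizeOf_lt_of_mem ‹_›; simp only [node.sizeOf_spec]; omega

/-- `L v` is the finite set of labels of leaves in the subtree rooted at `v`. -/
def L (v : RTree α) : Finset α := (leafList v).toFinset

/-- The counter function. -/
def counter (S : Finset α) : RTree α → ℕ
  | leaf a => if a ∈ S then 1 else 0
  | node cs =>
      (cs.attach.map fun ⟨w, _⟩ =>
        if counter S w = (L w).card then counter S w else 0).sum
decreasing_by have := List.sizeOf_lt_of_mem ‹_›; simp only [node.sizeOf_spec]; omega

/-- `IsVertex v t` means that `v` is a vertex (subtree) of `t`. -/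
inductive IsVertex : RTree α → RTree α → Prop
  | refl (t : RTree α) : IsVertex t t
  | child {v w : RTree α} {cs : List (RTree α)} : w ∈ cs → IsVertex v w → IsVertex v (node cs)

/-- The list of all vertices (subtrees) of a tree. -/
def vertexList : RTree α → List (RTree α)
  | leaf a => [leaf a]
  | node cs => node cs :: (cs.attach.map fun ⟨w, _⟩ => vertexList w).flatten
decreasing_by have := List.sizeOf_lt_of_mem ‹_›; simp only [node.sizeOf_spec]; omega

lemma leafList_node (cs : List (RTree α)) :
    leafList (node cs) = (cs.attach.map fun ⟨w, _⟩ => leafList w).flatten := by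
  rw [leafList]

lemma counter_node (S : Finset α) (cs : List (RTree α)) :
    counter S (node cs) = (cs.attach.map fun ⟨w, _⟩ =>
      if counter S w = (L w).card then counter S w else 0).sum := by
  rw [counter]

lemma nodup_child {cs : List (RTree α)} (h : (leafList (node cs)).Nodup)
    {w : RTree α} (hw : w ∈ cs) : (leafList w).Nodup := by
  rw [leafList_node, List.nodup_flatten] at h
  exact h.1 _ (List.mem_map.mpr ⟨⟨w, hw⟩, List.mem_attach _ _, rfl⟩)

lemma nodup_of_isVertex {u t : RTree α} (h : IsVertex u t) (hnd : t.leafList.Nodup) :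
    u.leafList.Nodup := by
  induction h with
  | refl => exact hnd
  | child hw _ ih => exact ih (nodup_child hnd hw)

lemma card_L_inter (S : Finset α) {v : RTree α} (h : (leafList v).Nodup) :
    (L v ∩ S).card = ((leafList v).filter (· ∈ S)).length := by
  rw [← List.toFinset_card_of_nodup (h.filter _)]
  congr 1
  ext x
  simp [L, List.mem_filter, and_comm]

lemma counter_le (S : Finset α) : ∀ (v : RTree α), (leafList v).Nodup →
    counter S v ≤ ((leafList v).filter (· ∈ S)).length
  | leaf a, _ => by
    rw [counter, leafList]
    split <;> rename_i h <;> simp [List.filter, h]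
  | node cs, h => by
    rw [counter_node, leafList_node, List.filter_flatten, List.length_flatten,
      List.map_map, List.map_map]
    apply List.sum_le_sum
    rintro ⟨w, hw⟩ _
    have ih := counter_le S w (nodup_child h hw)
    dsimp
    split
    · exact ih
    · exact Nat.zero_le _
decreasing_by have := List.sizeOf_lt_of_mem hw; simp only [node.sizeOf_spec]; omega

theorem compatible_of_counter_eq (t : RTree α) (hnd : t.leafList.Nodup)
    (S : Finset α) (u : RTree α) (hu : IsVertex u t) (hS : S ⊆ L u)
    (hc : counter S u = S.card) :
    ∀ cs : List (RTree α), u = node cs → ∀ w ∈ cs, L w ∩ S = ∅ ∨ L w ⊆ S := by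
  rintro cs rfl w hw
  have hnu : (leafList (node cs)).Nodup := nodup_of_isVertex hu hnd
  set f : {x // x ∈ cs} → ℕ := fun ⟨w, _⟩ =>
    if counter S w = (L w).card then counter S w else 0 with hf
  set g : {x // x ∈ cs} → ℕ := fun ⟨w, _⟩ => ((leafList w).filter (· ∈ S)).length with hg
  have h1 : ∀ i ∈ cs.attach, f i ≤ g i := by
    rintro ⟨w, hw⟩ _
    have ih := counter_le S w (nodup_child hnu hw)
    simp only [hf, hg]
    split
    · exact ih
    · exact Nat.zero_le _
  have hsumg : (cs.attach.map g).sum = S.card := by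
    have : L (node cs) ∩ S = S := Finset.inter_eq_right.mpr hS
    have h2 := card_L_inter S hnu
    rw [this] at h2
    rw [leafList_node, List.filter_flatten, List.length_flatten, List.map_map,
      List.map_map] at h2
    rw [h2]
    rfl
  have hsumf : (cs.attach.map f).sum = S.card := by rw [← counter_node]; exact hc
  have hfg : ∀ i ∈ cs.attach, f i = g i := by
    intro i hi
    by_contra hne
    have : (cs.attach.map f).sum < (cs.attach.map g).sum :=
      List.sum_lt_sum f g h1 ⟨i, hi, lt_of_le_of_ne (h1 i hi) hne⟩
    omega
  have key := hfg ⟨w, hw⟩ (List.mem_attach _ _)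
  simp only [hf, hg] at key
  rw [← card_L_inter S (nodup_child hnu hw)] at key
  split at key
  · right
    rename_i hfull
    rw [hfull] at key
    have : L w ∩ S = L w :=
      Finset.eq_of_subset_of_card_le Finset.inter_subset_left (le_of_eq key)
    exact Finset.inter_eq_left.mp this
  · left
    exact Finset.card_eq_zero.mp key.symm

end RTree
end

section
/- Let t be a rooted tree with pairwise distinct leaf labels, S a set of labels, and u a vertex of t with S ⊆ L(u). Then counter_S(u) = |S| if and only if for every child w of u, either L(w) ∩ S = ∅ or L(w) ⊆ S; that is, the counter test at u exactly characterizes compatibility of S with t at u. -/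
namespace RTree

variable {α : Type*} [DecidableEq α]

theorem _root_.List.sum_map_eq_sum_map_iff_of_le {ι M : Type*} [AddCommMonoid M]
    [PartialOrder M] [IsOrderedCancelAddMonoid M] {l : List ι} {f g : ι → M}
    (h : ∀ i ∈ l, f i ≤ g i) : (l.map f).sum = (l.map g).sum ↔ ∀ i ∈ l, f i = g i := by
  refine ⟨fun hsum => ?_, fun hfg => congrArg List.sum (List.map_congr_left hfg)⟩
  by_contra! ⟨i, hi, hne⟩
  exact (List.sum_lt_sum f g h ⟨i, hi, (h i hi).lt_of_ne hne⟩).ne hsum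

section LeafList

-- A fresh type variable keeps the ambient `[DecidableEq α]` out of these lemmas.
variable {β : Type*}

theorem leafList_node_s5 (cs : List (RTree β)) :
    leafList (node cs) = (cs.map leafList).flatten := by
  rw [leafList]
  simp

theorem nodup_leafList_of_mem {cs : List (RTree β)} {w : RTree β}
    (hnd : (node cs).leafList.Nodup) (hw : w ∈ cs) : w.leafList.Nodup := by
  rw [leafList_node_s5, List.nodup_flatten] at hnd
  exact hnd.1 _ (List.mem_map_of_mem hw)

theorem IsVertex.nodup_leafList {u t : RTree β} (hu : IsVertex u t)
    (hnd : t.leafList.Nodup) : u.leafList.Nodup := by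
  induction hu with
  | refl => exact hnd
  | child hw _ ih => exact ih (nodup_leafList_of_mem hnd hw)

end LeafList

def contribution (S : Finset α) (w : RTree α) : ℕ :=
  if counter S w = (L w).card then counter S w else 0

theorem counter_node_s5 (S : Finset α) (cs : List (RTree α)) :
    counter S (node cs) = (cs.map (contribution S)).sum := by
  rw [counter]
  simp only [List.map_attach_eq_pmap, List.pmap_eq_map]
  rfl

theorem mem_L_node {a : α} {cs : List (RTree α)} :
    a ∈ L (node cs) ↔ ∃ w ∈ cs, a ∈ L w := by
  simp [L, leafList_node_s5]

theorem card_L_of_nodup {v : RTree α} (hnd : v.leafList.Nodup) :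
    (L v).card = v.leafList.length :=
  List.toFinset_card_of_nodup hnd

theorem countP_leafList_eq_card {S : Finset α} {u : RTree α} (hnd : u.leafList.Nodup)
    (hS : S ⊆ L u) : u.leafList.countP (· ∈ S) = S.card := by
  have hfilter : (u.leafList.filter (· ∈ S)).toFinset = S := by
    ext a
    simpa [L] using fun ha => hS ha
  rw [List.countP_eq_length_filter, ← List.toFinset_card_of_nodup (hnd.filter _), hfilter]

theorem counter_le_countP (S : Finset α) : (v : RTree α) →
    counter S v ≤ v.leafList.countP (· ∈ S)
  | leaf a => by
    by_cases h : a ∈ S <;> simp [counter, leafList, h]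
  | node cs => by
    rw [counter_node_s5, leafList_node_s5, List.countP_flatten, List.map_map]
    refine List.sum_le_sum fun w _ => ?_
    have : contribution S w ≤ counter S w := by
      unfold contribution
      split <;> omega
    exact this.trans (counter_le_countP S w)
decreasing_by have := List.sizeOf_lt_of_mem ‹_›; simp only [node.sizeOf_spec]; omega

theorem contribution_le_countP (S : Finset α) (w : RTree α) :
    contribution S w ≤ w.leafList.countP (· ∈ S) := by
  unfold contribution
  split
  · exact counter_le_countP S w
  · exact Nat.zero_le _

theorem counter_eq_card_of_L_subset {S : Finset α} : (v : RTree α) → v.leafList.Nodup →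
    L v ⊆ S → counter S v = (L v).card
  | leaf a, _, hsub => by
    have ha : a ∈ S := hsub (by simp [L, leafList])
    simp [counter, L, leafList, ha]
  | node cs, hnd, hsub => by
    have hchild : ∀ w ∈ cs, contribution S w = w.leafList.length := fun w hw => by
      have hndw := nodup_leafList_of_mem hnd hw
      have hfull := counter_eq_card_of_L_subset w hndw fun a ha => hsub (mem_L_node.2 ⟨w, hw, ha⟩)
      rw [contribution, if_pos hfull, hfull, card_L_of_nodup hndw]
    rw [counter_node_s5, List.map_congr_left hchild, card_L_of_nodup hnd, leafList_node_s5,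
      List.length_flatten, List.map_map]
    rfl
decreasing_by have := List.sizeOf_lt_of_mem ‹_›; simp only [node.sizeOf_spec]; omega

theorem counter_eq_card_L_iff {S : Finset α} {v : RTree α} (hnd : v.leafList.Nodup) :
    counter S v = (L v).card ↔ L v ⊆ S := by
  refine ⟨fun h a ha => ?_, counter_eq_card_of_L_subset v hnd⟩
  have hall : v.leafList.countP (· ∈ S) = v.leafList.length :=
    le_antisymm List.countP_le_length
      (card_L_of_nodup hnd ▸ h ▸ counter_le_countP S v)
  simpa using List.countP_eq_length.1 hall a (by simpa [L] using ha)

theorem contribution_eq_countP_iff {S : Finset α} {w : RTree α} (hnd : w.leafList.Nodup) :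
    contribution S w = w.leafList.countP (· ∈ S) ↔ L w ∩ S = ∅ ∨ L w ⊆ S := by
  by_cases hfull : counter S w = (L w).card
  · have hsub := (counter_eq_card_L_iff hnd).1 hfull
    simp only [contribution, if_pos hfull, hsub, or_true, iff_true]
    rw [hfull, card_L_of_nodup hnd, eq_comm, List.countP_eq_length]
    simpa [L] using fun a ha => hsub ha
  · have hnsub : ¬ L w ⊆ S := mt (counter_eq_card_L_iff hnd).2 hfull
    rw [contribution, if_neg hfull, or_iff_left hnsub, eq_comm, List.countP_eq_zero]
    simp [Finset.eq_empty_iff_forall_notMem, L]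

/-- for `S ⊆ L(u)`, we have `counter_S(u) = |S|` iff for every child `w` of `u`,
either `L(w) ∩ S = ∅` or `L(w) ⊆ S`; i.e. the counter test at `u` exactly characterizes
compatibility of `S` with `t` at `u`. -/
theorem counter_eq_iff_compatible (t : RTree α) (hnd : t.leafList.Nodup)
    (S : Finset α) (u : RTree α) (hu : IsVertex u t) (hS : S ⊆ L u) :
    counter S u = S.card ↔
      ∀ cs : List (RTree α), u = node cs → ∀ w ∈ cs, L w ∩ S = ∅ ∨ L w ⊆ S := by
  have hndu := hu.nodup_leafList hnd
  rw [← countP_leafList_eq_card hndu hS]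
  cases u with
  | leaf a => simp [counter, leafList]
  | node cs =>
    simp only [node.injEq, forall_eq']
    rw [counter_node_s5, leafList_node_s5, List.countP_flatten, List.map_map, Function.comp_def,
      List.sum_map_eq_sum_map_iff_of_le fun w _ => contribution_le_countP S w]
    exact forall₂_congr fun w hw => contribution_eq_countP_iff (nodup_leafList_of_mem hndu hw)

end RTree
end
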